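/- arXiv:1801.02304 — 5 statements merged into one kernel-verified Lean document; each statement's English description precedes it below -/
import Mathlib

section
/- If (H, X) is a stable arrangement of oriented hyperplanes in ℝ^d (X open convex, and every nonempty intersection H_σ ∩ X of hyperplanes indexed by σ has dimension d − |σ|), then every nonempty atom A_σ of the cover {H_i⁺ ∩ X} has nonempty interior. -/
open scoped RealInnerProductSpace

/-- The atom `A_σ` of the arrangement of half-spaces `H_i⁺ = {x | w_i·x > h_i}`
relative to `X`: points of `X` lying in `H_i⁺` exactly for `i ∈ σ`. -/
def atom {n d : ℕ} (w : Fin n → EuclideanSpace ℝ (Fin d)) (h : Fin n → ℝ)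
    (X : Set (EuclideanSpace ℝ (Fin d))) (σ : Finset (Fin n)) :
    Set (EuclideanSpace ℝ (Fin d)) :=
  {x ∈ X | ∀ i, i ∈ σ ↔ h i < ⟪w i, x⟫}

/-- A stable arrangement: `X` open and convex, all normals nonzero, and every
collection of hyperplanes meeting `X` has linearly independent normals
(equivalently, the intersection has dimension `d - |σ|`). -/
def StableArr {n d : ℕ} (w : Fin n → EuclideanSpace ℝ (Fin d)) (h : Fin n → ℝ)
    (X : Set (EuclideanSpace ℝ (Fin d))) : Prop :=
  IsOpen X ∧ Convex ℝ X ∧ (∀ i, w i ≠ 0) ∧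
    ∀ σ : Finset (Fin n),
      (X ∩ ⋂ i ∈ σ, {x | ⟪w i, x⟫ = h i}).Nonempty →
        LinearIndependent ℝ (fun i : σ => w i.1)

open Filter
open scoped Matrix Topology

/-!
Take `x` in the atom and let `τ` index the hyperplanes through `x`. By stability their normals
are linearly independent, so their Gram matrix is invertible and some direction `v` has
`⟪w i, v⟫ = -1` for all `i ∈ τ`. A short step from `x` along `v` keeps every strict inequality
and makes the tight ones strict on the negative side, so it lands on a point of the atom lying on
no hyperplane, and the atom is a neighbourhood of such a point.
-/

theorem exists_inner_eq_of_linearIndependent {ι E : Type*} [Fintype ι]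
    [NormedAddCommGroup E] [InnerProductSpace ℝ E] {w : ι → E}
    (hw : LinearIndependent ℝ w) (c : ι → ℝ) : ∃ v : E, ∀ i, ⟪w i, v⟫ = c i := by
  classical
  set G := Matrix.gram ℝ w
  have hG : IsUnit G.det := (Matrix.det_gram_ne_zero_iff_linearIndependent.2 hw).isUnit
  refine ⟨∑ j, (G⁻¹ *ᵥ c) j • w j, fun i => ?_⟩
  calc ⟪w i, ∑ j, (G⁻¹ *ᵥ c) j • w j⟫ = (G *ᵥ (G⁻¹ *ᵥ c)) i := by
        simp [inner_sum, inner_smul_right, Matrix.mulVec, dotProduct, mul_comm, G]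
    _ = c i := by rw [Matrix.mulVec_mulVec, Matrix.mul_nonsing_inv G hG, Matrix.one_mulVec]

theorem eventually_add_mul_neg {a b : ℝ} (ha : a ≤ 0) (hb : a = 0 → b < 0) :
    ∀ᶠ t in 𝓝[>] 0, a + t * b < 0 := by
  rcases ha.lt_or_eq with ha | rfl
  · have : Tendsto (fun t : ℝ => a + t * b) (𝓝 0) (𝓝 a) :=
      (continuous_const.add (continuous_id.mul continuous_const)).tendsto' 0 a (by simp)
    exact (this.eventually_lt_const ha).filter_mono nhdsWithin_le_nhds
  · filter_upwards [self_mem_nhdsWithin] with t (ht : 0 < t)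
    simpa using mul_neg_of_pos_of_neg ht (hb rfl)

section Atom

variable {n d : ℕ} {w : Fin n → EuclideanSpace ℝ (Fin d)} {h : Fin n → ℝ}
  {X : Set (EuclideanSpace ℝ (Fin d))} {σ : Finset (Fin n)}

theorem atom_mem_nhds {y : EuclideanSpace ℝ (Fin d)} (hX : IsOpen X) (hy : y ∈ atom w h X σ)
    (hy' : ∀ i, ⟪w i, y⟫ ≠ h i) : atom w h X σ ∈ 𝓝 y := by
  have hside : ∀ i, ∀ᶠ z in 𝓝 y, (i ∈ σ ↔ h i < ⟪w i, z⟫) := by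
    intro i
    have hcont : Continuous fun z => ⟪w i, z⟫ := continuous_const.inner continuous_id
    rcases (hy' i).lt_or_gt with hlt | hgt
    · filter_upwards [hcont.continuousAt.eventually_lt_const hlt] with z hz
      rw [hy.2 i]
      exact iff_of_false hlt.not_gt hz.not_gt
    · filter_upwards [hcont.continuousAt.eventually_const_lt hgt] with z hz
      rw [hy.2 i]
      exact iff_of_true hgt hz
  filter_upwards [hX.mem_nhds hy.1, eventually_all.2 hside] with z hzX hz using ⟨hzX, hz⟩

theorem exists_mem_atom_forall_inner_ne {x v : EuclideanSpace ℝ (Fin d)} (hX : IsOpen X)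
    (hx : x ∈ atom w h X σ) (hv : ∀ i, ⟪w i, x⟫ = h i → ⟪w i, v⟫ < 0) :
    ∃ y ∈ atom w h X σ, ∀ i, ⟪w i, y⟫ ≠ h i := by
  have hline : ∀ (t : ℝ) i, ⟪w i, x + t • v⟫ = ⟪w i, x⟫ + t * ⟪w i, v⟫ := fun t i => by
    rw [inner_add_right, real_inner_smul_right]
  have hside : ∀ i, ∀ᶠ t in 𝓝[>] (0 : ℝ),
      (i ∈ σ ↔ h i < ⟪w i, x + t • v⟫) ∧ ⟪w i, x + t • v⟫ ≠ h i := by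
    intro i
    by_cases hi : i ∈ σ
    · have hlt := (hx.2 i).1 hi
      filter_upwards [eventually_add_mul_neg (a := h i - ⟪w i, x⟫) (b := -⟪w i, v⟫)
        (by linarith) (fun h0 => by linarith)] with t ht
      rw [hline]
      exact ⟨iff_of_true hi (by linarith), by linarith⟩
    · have hle : ⟪w i, x⟫ ≤ h i := not_lt.1 (mt (hx.2 i).2 hi)
      filter_upwards [eventually_add_mul_neg (a := ⟪w i, x⟫ - h i) (b := ⟪w i, v⟫)
        (by linarith) (fun h0 => hv i (by linarith))] with t ht
      rw [hline]
      exact ⟨iff_of_false hi (by linarith), by linarith⟩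
  have hXt : ∀ᶠ t in 𝓝[>] (0 : ℝ), x + t • v ∈ X :=
    (((continuous_const.add (continuous_id.smul continuous_const)).tendsto' 0 x (by simp)).eventually
      (hX.mem_nhds hx.1)).filter_mono nhdsWithin_le_nhds
  obtain ⟨t, htX, ht⟩ := (hXt.and (eventually_all.2 hside)).exists
  exact ⟨x + t • v, ⟨htX, fun i => (ht i).1⟩, fun i => (ht i).2⟩

end Atom

/-- In a stable arrangement, every nonempty atom has nonempty interior. -/
theorem atom_interior_nonempty {n d : ℕ} (w : Fin n → EuclideanSpace ℝ (Fin d))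
    (h : Fin n → ℝ) (X : Set (EuclideanSpace ℝ (Fin d)))
    (hst : StableArr w h X) (σ : Finset (Fin n)) (hne : (atom w h X σ).Nonempty) :
    (interior (atom w h X σ)).Nonempty := by
  classical
  obtain ⟨hX, -, -, hstab⟩ := hst
  obtain ⟨x, hx⟩ := hne
  set τ := Finset.univ.filter fun i => ⟪w i, x⟫ = h i
  obtain ⟨v, hv⟩ := exists_inner_eq_of_linearIndependent
    (hstab τ ⟨x, hx.1, by simp [τ]⟩) fun _ => -1
  have hv_neg : ∀ i, ⟪w i, x⟫ = h i → ⟪w i, v⟫ < 0 := fun i hi => by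
    rw [hv ⟨i, by simpa [τ] using hi⟩]
    norm_num
  obtain ⟨y, hy, hy'⟩ := exists_mem_atom_forall_inner_ne hX hx hv_neg
  exact ⟨y, mem_interior_iff_mem_nhds.2 (atom_mem_nhds hX hy hy')⟩
end

section
/- If C = code(H, X) for a stable hyperplane arrangement (H, X), then the polar complex Γ(C) equals the nerve of the cover {H_i⁺ ∩ X, H_i⁻ ∩ X}_{i∈[n]}, i.e. a subset F = F⁺ ⊔ F̄⁻ is a face of Γ(C) if and only if X ∩ ⋂_{i∈F⁺} H_i⁺ ∩ ⋂_{j∈F⁻} H_j⁻ ≠ ∅. -/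
open scoped RealInnerProductSpace

def hcode {n d : ℕ} (w : Fin n → EuclideanSpace ℝ (Fin d)) (h : Fin n → ℝ)
    (X : Set (EuclideanSpace ℝ (Fin d))) : Set (Finset (Fin n)) :=
  {σ | (atom w h X σ).Nonempty}

def polarFace {n : ℕ} (σ : Finset (Fin n)) : Finset (Fin n ⊕ Fin n) :=
  σ.image Sum.inl ∪ σᶜ.image Sum.inr

def polar {n : ℕ} (C : Set (Finset (Fin n))) : Set (Finset (Fin n ⊕ Fin n)) :=
  {F | ∃ σ ∈ C, F ⊆ polarFace σ}

/-!
A face `F⁺ ⊔ F̄⁻` of `Γ(code(H, X))` is the same as a point `x ∈ X` lying strictly on the positive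
side of `H_i` for `i ∈ F⁺` and weakly on the negative side of `H_j` for `j ∈ F⁻`. The only obstacle
to a point of the nerve cell is that `x` may lie on some of these `H_j`. Stability makes their
normals linearly independent, so the Gram system `⟪w_j, v⟫ = -1` has a solution `v`, and `x + t • v`
for small `t > 0` leaves all those hyperplanes on the negative side while keeping the strict
inequalities, which define an open set.
-/

open Filter Topology

theorem LinearIndependent.exists_inner_eq {E ι : Type*} [NormedAddCommGroup E]
    [InnerProductSpace ℝ E] [Fintype ι] {w : ι → E} (hw : LinearIndependent ℝ w) (c : ι → ℝ) :
    ∃ v : E, ∀ j, ⟪w j, v⟫ = c j := by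
  classical
  obtain ⟨a, ha⟩ := Matrix.mulVec_surjective_iff_isUnit.mpr
    (Matrix.posDef_gram_of_linearIndependent hw).isUnit c
  refine ⟨∑ i, a i • w i, fun j => ?_⟩
  simp [← ha, inner_sum, real_inner_smul_right, Matrix.mulVec, dotProduct, mul_comm]

theorem eventually_nhdsGT_add_mul_lt {a b c : ℝ} (hac : a ≤ c) (hb : a = c → b < 0) :
    ∀ᶠ t in 𝓝[>] 0, a + t * b < c := by
  rcases hac.lt_or_eq with hlt | rfl
  · have : Tendsto (fun t : ℝ => a + t * b) (𝓝 0) (𝓝 a) := by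
      simpa using ((continuous_mul_const b).const_add a).tendsto 0
    exact (this.eventually_lt_const hlt).filter_mono nhdsWithin_le_nhds
  · filter_upwards [self_mem_nhdsWithin] with t (ht : 0 < t)
    nlinarith [hb rfl]

theorem Finset.image_inl_union_image_inr_subset_iff {α β : Type*} [DecidableEq α] [DecidableEq β]
    {s s' : Finset α} {t t' : Finset β} :
    s.image Sum.inl ∪ t.image Sum.inr ⊆ s'.image Sum.inl ∪ t'.image Sum.inr ↔ s ⊆ s' ∧ t ⊆ t' := by
  simp [Finset.subset_iff]

section StableArr

variable {n d : ℕ} {w : Fin n → EuclideanSpace ℝ (Fin d)} {h : Fin n → ℝ}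
  {X : Set (EuclideanSpace ℝ (Fin d))}

theorem image_inl_union_image_inr_mem_polar_hcode_iff {Fp Fm : Finset (Fin n)} :
    Fp.image Sum.inl ∪ Fm.image Sum.inr ∈ polar (hcode w h X) ↔
      ∃ x ∈ X, (∀ i ∈ Fp, h i < ⟪w i, x⟫) ∧ ∀ j ∈ Fm, ⟪w j, x⟫ ≤ h j := by
  classical
  simp only [polar, hcode, polarFace, Set.mem_ofPred_eq, Finset.image_inl_union_image_inr_subset_iff]
  constructor
  · rintro ⟨σ, ⟨x, hxX, hxσ⟩, hpσ, hmσ⟩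
    refine ⟨x, hxX, fun i hi => (hxσ i).1 (hpσ hi), fun j hj => not_lt.1 fun hlt => ?_⟩
    exact Finset.mem_compl.1 (hmσ hj) ((hxσ j).2 hlt)
  · rintro ⟨x, hxX, hp, hm⟩
    refine ⟨({i | h i < ⟪w i, x⟫} : Finset (Fin n)), ⟨x, hxX, fun i => by simp⟩,
      fun i hi => ?_, fun j hj => ?_⟩
    · simpa using hp i hi
    · simpa using hm j hj

theorem StableArr.nonempty_inter_of_le (hst : StableArr w h X) {Fp Fm : Finset (Fin n)}
    {x : EuclideanSpace ℝ (Fin d)} (hxX : x ∈ X) (hp : ∀ i ∈ Fp, h i < ⟪w i, x⟫)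
    (hm : ∀ j ∈ Fm, ⟪w j, x⟫ ≤ h j) :
    (X ∩ (⋂ i ∈ Fp, {y | h i < ⟪w i, y⟫}) ∩ ⋂ j ∈ Fm, {y | ⟪w j, y⟫ < h j}).Nonempty := by
  classical
  obtain ⟨hXopen, -, -, hgen⟩ := hst
  set T := Fm.filter fun j => ⟪w j, x⟫ = h j
  obtain ⟨v, hv⟩ := (hgen T ⟨x, hxX, by simp [T]⟩).exists_inner_eq fun _ => -1
  have hU : IsOpen (X ∩ ⋂ i ∈ Fp, {y | h i < ⟪w i, y⟫}) :=
    hXopen.inter <| isOpen_biInter_finset fun i _ =>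
      isOpen_lt continuous_const (continuous_const.inner continuous_id)
  have hline : Tendsto (fun t : ℝ => x + t • v) (𝓝[>] 0) (𝓝 x) := by
    refine tendsto_nhdsWithin_of_tendsto_nhds ?_
    simpa using ((continuous_id.smul continuous_const).const_add x).tendsto (0 : ℝ)
  have hstrict : ∀ᶠ t in 𝓝[>] (0 : ℝ), x + t • v ∈ X ∩ ⋂ i ∈ Fp, {y | h i < ⟪w i, y⟫} :=
    hline.eventually_mem (hU.mem_nhds ⟨hxX, by simpa using hp⟩)
  have hpushed : ∀ᶠ t in 𝓝[>] (0 : ℝ), ∀ j ∈ Fm, ⟪w j, x + t • v⟫ < h j := by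
    refine (eventually_all_finset Fm).2 fun j hj => ?_
    simp_rw [inner_add_right, real_inner_smul_right]
    refine eventually_nhdsGT_add_mul_lt (hm j hj) fun heq => ?_
    rw [hv ⟨j, by simp [T, hj, heq]⟩]
    norm_num
  obtain ⟨t, htU, htm⟩ := (hstrict.and hpushed).exists
  exact ⟨x + t • v, htU, by simpa using htm⟩

end StableArr

/-- For a stable arrangement, the polar complex of the code is the nerve of the cover
`{H_i⁺ ∩ X, H_i⁻ ∩ X}`: a set `F = F⁺ ⊔ F̄⁻` is a face of `Γ(code(H,X))` iff the
corresponding intersection of half-spaces meets `X`. -/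
theorem polar_eq_nerve {n d : ℕ} (w : Fin n → EuclideanSpace ℝ (Fin d))
    (h : Fin n → ℝ) (X : Set (EuclideanSpace ℝ (Fin d)))
    (hst : StableArr w h X) (Fp Fm : Finset (Fin n)) :
    (Fp.image Sum.inl ∪ Fm.image Sum.inr) ∈ polar (hcode w h X) ↔
      (X ∩ (⋂ i ∈ Fp, {x | h i < ⟪w i, x⟫}) ∩ ⋂ j ∈ Fm, {x | ⟪w j, x⟫ < h j}).Nonempty := by
  rw [image_inl_union_image_inr_mem_polar_hcode_iff]
  constructor
  · rintro ⟨x, hxX, hp, hm⟩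
    exact hst.nonempty_inter_of_le hxX hp hm
  · rintro ⟨x, ⟨hxX, hp⟩, hm⟩
    simp only [Set.mem_iInter, Set.mem_ofPred_eq] at hp hm
    exact ⟨x, hxX, hp, fun j hj => (hm j hj).le⟩
end

section
/- For any code C ⊆ 2^[n] and any face T of the polar complex Γ(C), the link of T in Γ(C) is itself (isomorphic to) the polar complex of a code on the vertex set [n] \ supp(T), namely the code {σ \ supp(T) : σ ∈ C, T⁺ ⊆ σ, σ ∩ T⁻ = ∅}. -/
/-- The polar complex of a code on a vertex set `V ⊆ [n]` (codewords `σ ⊆ V`,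
barred part taken inside `V`). -/
def polarOn {n : ℕ} (V : Finset (Fin n)) (C : Set (Finset (Fin n))) :
    Set (Finset (Fin n ⊕ Fin n)) :=
  {F | ∃ σ ∈ C, F ⊆ σ.image Sum.inl ∪ (V \ σ).image Sum.inr}

/-- The link of a face `T` in a simplicial complex `Δ`. -/
def link {V : Type*} [DecidableEq V] (Δ : Set (Finset V)) (T : Finset V) :
    Set (Finset V) :=
  {ν ∈ Δ | ν ∩ T = ∅ ∧ ν ∪ T ∈ Δ}

/-- The link of a face `T = T⁺ ⊔ T̄⁻` of the polar complex `Γ(C)` is the polar complex,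
on the vertex set `[n] \ supp(T)`, of the code `{σ \ supp(T) : σ ∈ C, T⁺ ⊆ σ, σ ∩ T⁻ = ∅}`. -/
theorem link_polar_eq_polar {n : ℕ} (C : Set (Finset (Fin n))) (Tp Tm : Finset (Fin n))
    (hT : (Tp.image Sum.inl ∪ Tm.image Sum.inr) ∈ polar C) :
    link (polar C) (Tp.image Sum.inl ∪ Tm.image Sum.inr)
      = polarOn (Tp ∪ Tm)ᶜ
          {τ | ∃ σ ∈ C, Tp ⊆ σ ∧ σ ∩ Tm = ∅ ∧ τ = σ \ (Tp ∪ Tm)} := by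
  classical
  ext F
  constructor
  · rintro ⟨-, hdisj, σ, hσ, hsub⟩
    have hTp : Tp ⊆ σ := by
      intro j hj
      have h : (Sum.inl j : Fin n ⊕ Fin n) ∈ polarFace σ :=
        hsub (Finset.mem_union_right _ (by simp [hj]))
      simpa [polarFace] using h
    have hTm : σ ∩ Tm = ∅ := by
      ext j
      simp only [Finset.mem_inter, Finset.notMem_empty, iff_false, not_and]
      intro hjσ hjTm
      have h : (Sum.inr j : Fin n ⊕ Fin n) ∈ polarFace σ :=
        hsub (Finset.mem_union_right _ (by simp [hjTm]))
      have : j ∉ σ := by simpa [polarFace] using h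
      exact this hjσ
    refine ⟨σ \ (Tp ∪ Tm), ⟨σ, hσ, hTp, hTm, rfl⟩, ?_⟩
    intro x hx
    have hx' : x ∈ polarFace σ := hsub (Finset.mem_union_left _ hx)
    have hxT : x ∉ (Tp.image Sum.inl ∪ Tm.image Sum.inr) := by
      intro h
      have hm : x ∈ F ∩ (Tp.image Sum.inl ∪ Tm.image Sum.inr) :=
        Finset.mem_inter.mpr ⟨hx, h⟩
      rw [hdisj] at hm
      exact absurd hm (Finset.notMem_empty x)
    cases x with
    | inl j =>
      have hjσ : j ∈ σ := by simpa [polarFace] using hx'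
      have hjTp : j ∉ Tp := by intro h; exact hxT (by simp [h])
      have hjTm : j ∉ Tm := by
        intro h
        have hm : j ∈ σ ∩ Tm := Finset.mem_inter.mpr ⟨hjσ, h⟩
        rw [hTm] at hm
        exact absurd hm (Finset.notMem_empty j)
      simp [hjσ, hjTp, hjTm]
    | inr j =>
      have hjσ : j ∉ σ := by simpa [polarFace] using hx'
      have hjTm : j ∉ Tm := by intro h; exact hxT (by simp [h])
      have hjTp : j ∉ Tp := fun h => hjσ (hTp h)
      simp [hjσ, hjTp, hjTm]
  · rintro ⟨τ, ⟨σ, hσ, hTp, hTm, rfl⟩, hsub⟩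
    have key : ∀ x ∈ F, x ∈ polarFace σ ∧ x ∉ (Tp.image Sum.inl ∪ Tm.image Sum.inr) := by
      intro x hx
      have hx' := hsub hx
      cases x with
      | inl j =>
        have hj : j ∈ σ \ (Tp ∪ Tm) := by simpa using hx'
        simp only [Finset.mem_sdiff, Finset.mem_union, not_or] at hj
        constructor
        · simp [polarFace, hj.1]
        · simp [hj.2.1, hj.2.2]
      | inr j =>
        have hj : j ∈ (Tp ∪ Tm)ᶜ \ (σ \ (Tp ∪ Tm)) := by simpa using hx'
        simp only [Finset.mem_sdiff, Finset.mem_compl, Finset.mem_union, not_or,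
          not_and, not_not] at hj
        have hjTp : j ∉ Tp := hj.1.1
        have hjTm : j ∉ Tm := hj.1.2
        have hjσ : j ∉ σ := by
          intro h
          exact absurd (hj.2 h) (by simp [hjTp, hjTm])
        constructor
        · simp [polarFace, hjσ]
        · simp [hjTp, hjTm]
    have hFsub : F ⊆ polarFace σ := fun x hx => (key x hx).1
    have hUnion : F ∪ (Tp.image Sum.inl ∪ Tm.image Sum.inr) ⊆ polarFace σ := by
      intro x hx
      rcases Finset.mem_union.mp hx with h | h
      · exact hFsub h
      rcases Finset.mem_union.mp h with h | h
      · rcases Finset.mem_image.mp h with ⟨j, hj, rfl⟩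
        exact Finset.mem_union_left _ (Finset.mem_image_of_mem _ (hTp hj))
      · rcases Finset.mem_image.mp h with ⟨j, hj, rfl⟩
        refine Finset.mem_union_right _ (Finset.mem_image_of_mem _ ?_)
        simp only [Finset.mem_compl]
        intro hjσ
        have hm : j ∈ σ ∩ Tm := Finset.mem_inter.mpr ⟨hjσ, hj⟩
        rw [hTm] at hm
        exact absurd hm (Finset.notMem_empty j)
    refine ⟨⟨σ, hσ, hFsub⟩, ?_, ⟨σ, hσ, hUnion⟩⟩
    ext x
    simp only [Finset.mem_inter, Finset.notMem_empty, iff_false, not_and]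
    intro hx
    exact (key x hx).2
end

section
/- For a nonempty code C ⊆ 2^[n], a squarefree monomial x^σ y^τ (σ, τ ⊆ [n]) lies in the Stanley–Reisner ideal of the polar complex Γ(C) if and only if the pseudo-monomial x^σ(1−x)^τ lies in the vanishing ideal I_C, i.e. if and only if every codeword α ∈ C with σ ⊆ α satisfies α ∩ τ ≠ ∅. -/
/-!
At the indicator vector of a codeword `α`, the pseudo-monomial `x^σ (1-x)^τ` takes the value
`1` exactly when `σ ⊆ α` and `α ∩ τ = ∅`, and `0` otherwise. The monomial `x^F` lies in the
Stanley–Reisner ideal exactly when `F` is a nonface: if `F` lies in a face `G`, evaluating at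
the indicator vector of `G` kills every generator but sends `x^F` to `1`. Since `x^σ y^τ` is
`x^F` for `F = σ ⊔ τ`, and `σ ⊔ τ` lies in the facet `α ⊔ αᶜ` exactly when `σ ⊆ α` and
`α ∩ τ = ∅`, both memberships say that no codeword has these two properties.
-/

open MvPolynomial

/-- The Stanley–Reisner ideal of the polar complex `Γ(C)` in
`𝔽₂[x₁,…,xₙ,y₁,…,yₙ]` (variables indexed by `Fin n ⊕ Fin n`): generated by the
squarefree monomials of nonfaces. -/
noncomputable def SRideal {n : ℕ} (C : Set (Finset (Fin n))) :
    Ideal (MvPolynomial (Fin n ⊕ Fin n) (ZMod 2)) :=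
  Ideal.span {m | ∃ F : Finset (Fin n ⊕ Fin n), F ∉ polar C ∧ m = ∏ v ∈ F, X v}

/-- The vanishing ideal `I_C`: polynomials vanishing on the indicator vectors of
all codewords. -/
def Ivan {n : ℕ} (C : Set (Finset (Fin n))) : Set (MvPolynomial (Fin n) (ZMod 2)) :=
  {p | ∀ α ∈ C, eval (fun i => if i ∈ α then (1 : ZMod 2) else 0) p = 0}

section Evaluation

variable {ι R : Type*} [DecidableEq ι]

lemma eval_indicator_prod_X [CommSemiring R] (F G : Finset ι) :
    eval (fun v => if v ∈ G then (1 : R) else 0) (∏ v ∈ F, X v) = if F ⊆ G then 1 else 0 := by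
  simp only [map_prod, eval_X, Finset.prod_boole, Finset.subset_iff]

lemma eval_indicator_prod_one_sub_X [CommRing R] (α τ : Finset ι) :
    eval (fun i => if i ∈ α then (1 : R) else 0) (∏ j ∈ τ, (1 - X j)) =
      if Disjoint α τ then 1 else 0 := by
  have h (j : ι) : (1 : R) - (if j ∈ α then 1 else 0) = if j ∉ α then 1 else 0 := by
    split_ifs <;> simp_all
  simp only [map_prod, map_sub, map_one, eval_X, h, Finset.prod_boole,
    Finset.disjoint_right]

end Evaluation

lemma pseudoMonomial_mem_Ivan_iff {n : ℕ} (C : Set (Finset (Fin n))) (σ τ : Finset (Fin n)) :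
    ((∏ i ∈ σ, X i) * ∏ j ∈ τ, (1 - X j)) ∈ Ivan C ↔
      ∀ α ∈ C, σ ⊆ α → (α ∩ τ).Nonempty := by
  simp only [Ivan, Set.mem_ofPred_eq, map_mul, eval_indicator_prod_X (R := ZMod 2),
    eval_indicator_prod_one_sub_X, ite_zero_mul_ite_zero, mul_one, ite_eq_right_iff,
    one_ne_zero, imp_false, not_and, ← Finset.not_disjoint_iff_nonempty_inter]

lemma polarFace_eq_disjSum {n : ℕ} (α : Finset (Fin n)) : polarFace α = α.disjSum αᶜ := by
  ext (i | i) <;> simp [polarFace]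

lemma disjSum_subset_polarFace_iff {n : ℕ} (σ τ α : Finset (Fin n)) :
    σ.disjSum τ ⊆ polarFace α ↔ σ ⊆ α ∧ Disjoint α τ := by
  rw [polarFace_eq_disjSum, Finset.disjSum_subset, Finset.toLeft_disjSum, Finset.toRight_disjSum,
    Finset.subset_compl_iff_disjoint_left]

lemma SRideal_le_ker_eval {n : ℕ} {C : Set (Finset (Fin n))} {G : Finset (Fin n ⊕ Fin n)}
    (hG : G ∈ polar C) :
    SRideal C ≤ RingHom.ker (eval fun v => if v ∈ G then (1 : ZMod 2) else 0) := by
  rw [SRideal, Ideal.span_le]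
  rintro _ ⟨F, hF, rfl⟩
  have hFG : ¬F ⊆ G := fun h => hF <| hG.imp fun _ ⟨hα, hGα⟩ => ⟨hα, h.trans hGα⟩
  rw [SetLike.mem_coe, RingHom.mem_ker, eval_indicator_prod_X, if_neg hFG]

lemma prod_X_mem_SRideal_iff {n : ℕ} (C : Set (Finset (Fin n))) (F : Finset (Fin n ⊕ Fin n)) :
    ∏ v ∈ F, X v ∈ SRideal C ↔ F ∉ polar C := by
  refine ⟨fun hF hface => ?_, fun hF => Ideal.subset_span ⟨F, hF, rfl⟩⟩
  have := SRideal_le_ker_eval hface hF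
  rw [RingHom.mem_ker, eval_indicator_prod_X, if_pos subset_rfl] at this
  exact one_ne_zero this

theorem SR_iff_pseudo_monomial_general {n : ℕ} (C : Set (Finset (Fin n)))
    (σ τ : Finset (Fin n)) :
    (((∏ i ∈ σ, X (Sum.inl i)) * ∏ j ∈ τ, X (Sum.inr j)) ∈ SRideal C ↔
      ((∏ i ∈ σ, X i) * ∏ j ∈ τ, (1 - X j)) ∈ Ivan C) ∧
    (((∏ i ∈ σ, X i) * ∏ j ∈ τ, (1 - X j)) ∈ Ivan C ↔
      ∀ α ∈ C, σ ⊆ α → (α ∩ τ).Nonempty) := by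
  refine ⟨?_, pseudoMonomial_mem_Ivan_iff C σ τ⟩
  rw [pseudoMonomial_mem_Ivan_iff, ← Finset.prod_disjSum, prod_X_mem_SRideal_iff]
  simp only [polar, Set.mem_ofPred_eq, disjSum_subset_polarFace_iff,
    not_exists, not_and, ← Finset.not_disjoint_iff_nonempty_inter]

/-- For a nonempty code `C`, the squarefree monomial `x^σ y^τ` lies in the
Stanley–Reisner ideal of `Γ(C)` iff the pseudo-monomial `x^σ (1-x)^τ` lies in the
vanishing ideal `I_C`, i.e. iff every codeword `α ∈ C` with `σ ⊆ α` meets `τ`. -/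
theorem SR_iff_pseudo_monomial {n : ℕ} (C : Set (Finset (Fin n))) (hC : C.Nonempty)
    (σ τ : Finset (Fin n)) :
    (((∏ i ∈ σ, X (Sum.inl i)) * ∏ j ∈ τ, X (Sum.inr j)) ∈ SRideal C ↔
      ((∏ i ∈ σ, X i) * ∏ j ∈ τ, (1 - X j)) ∈ Ivan C) ∧
    (((∏ i ∈ σ, X i) * ∏ j ∈ τ, (1 - X j)) ∈ Ivan C ↔
      ∀ α ∈ C, σ ⊆ α → (α ∩ τ).Nonempty) :=
  SR_iff_pseudo_monomial_general C σ τ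
end

section
/- If Δ is a pure simplicial complex with facets ordered F₁,...,F_t so that for each i ≥ 2 the set difference Δ({F₁,...,F_i}) \ Δ({F₁,...,F_{i−1}}) has a unique minimal element r(F_i) (shelling order, second definition), then for each i ≥ 2 the complex Δ({F_i}) ∩ Δ({F₁,...,F_{i−1}}) is pure of dimension dim Δ − 1 (shelling order, first definition). -/
/-- The simplicial complex generated by the facets `F j` for `j` in an index set `S`. -/
def genBy {V : Type*} {t : ℕ} (F : Fin t → Finset V) (S : Set (Fin t)) :
    Set (Finset V) :=
  {ν | ∃ j ∈ S, ν ⊆ F j}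

/-- Every member of a set of finsets contains a minimal member. -/
lemma exists_min_mem {V : Type*} [DecidableEq V] (D : Set (Finset V)) (σ : Finset V)
    (hσ : σ ∈ D) : ∃ m ∈ D, m ⊆ σ ∧ ∀ s ∈ D, s ⊆ m → s = m := by
  induction σ using Finset.strongInduction with
  | _ σ ih =>
    by_cases h : ∀ s ∈ D, s ⊆ σ → s = σ
    · exact ⟨σ, hσ, subset_rfl, h⟩
    · push_neg at h
      obtain ⟨s, hsD, hsσ, hne⟩ := h
      obtain ⟨m, hmD, hms, hmmin⟩ := ih s (lt_of_le_of_ne hsσ hne) hsD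
      exact ⟨m, hmD, hms.trans hsσ, hmmin⟩

/-- If the facets `F₁,…,F_t` of a pure complex (all of cardinality `k`, i.e. dimension
`k-1`) are ordered so that each difference `Δ({F₁,…,F_i}) \ Δ({F₁,…,F_{i-1}})` has a
unique minimal element (second definition of shelling order), then for each `i ≥ 2`
the complex `Δ({F_i}) ∩ Δ({F₁,…,F_{i-1}})` is pure of dimension `k - 2`
(first definition of shelling order). -/
theorem shelling_defs_agree {V : Type*} [DecidableEq V] {t k : ℕ}
    (F : Fin t → Finset V) (hcard : ∀ i, (F i).card = k)
    (hinj : Function.Injective F)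
    (hmin : ∀ i : Fin t, 0 < (i : ℕ) →
      ∃! r : Finset V,
        r ∈ genBy F {j | j ≤ i} \ genBy F {j | j < i} ∧
        ∀ s ∈ genBy F {j | j ≤ i} \ genBy F {j | j < i}, s ⊆ r → s = r) :
    ∀ i : Fin t, 0 < (i : ℕ) →
      ∀ ν ∈ {ν : Finset V | ν ⊆ F i} ∩ genBy F {j | j < i},
        ∃ μ ∈ {ν : Finset V | ν ⊆ F i} ∩ genBy F {j | j < i},
          ν ⊆ μ ∧ μ.card = k - 1 := by
  intro i hi ν hν
  obtain ⟨hνFi, hνlt⟩ := hν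
  obtain ⟨r, ⟨hrD, hrmin⟩, hruniq⟩ := hmin i hi
  have hrFi : r ⊆ F i := by
    obtain ⟨⟨j, hj, hjsub⟩, hnot⟩ := hrD
    have hj' : j ≤ i := hj
    rcases lt_or_eq_of_le hj' with h | h
    · exact absurd ⟨j, (h : j < i), hjsub⟩ hnot
    · exact h ▸ hjsub
  -- key: a subset of `F i` not in the earlier complex contains `r`
  have key : ∀ σ : Finset V, σ ⊆ F i → σ ∉ genBy F {j | j < i} → r ⊆ σ := by
    intro σ hσ hσnot
    have hσD : σ ∈ genBy F {j | j ≤ i} \ genBy F {j | j < i} :=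
      ⟨⟨i, le_refl i, hσ⟩, hσnot⟩
    obtain ⟨m, hmD, hmσ, hmmin⟩ :=
      exists_min_mem (genBy F {j | j ≤ i} \ genBy F {j | j < i}) σ hσD
    have : m = r := hruniq m ⟨hmD, hmmin⟩
    exact this ▸ hmσ
  -- r is not contained in ν
  have hrν : ¬ r ⊆ ν := by
    intro hsub
    obtain ⟨j, hj, hjsub⟩ := hνlt
    exact hrD.2 ⟨j, hj, hsub.trans hjsub⟩
  obtain ⟨x, hxr, hxν⟩ := Finset.not_subset.mp hrν
  refine ⟨(F i).erase x, ⟨Finset.erase_subset x (F i), ?_⟩, ?_, ?_⟩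
  · by_contra h
    exact Finset.notMem_erase x (F i) (key _ (Finset.erase_subset x (F i)) h hxr)
  · intro y hy
    exact Finset.mem_erase.mpr ⟨fun h => hxν (h ▸ hy), hνFi hy⟩
  · rw [Finset.card_erase_of_mem (hrFi hxr), hcard]
end
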